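/- Let K be a vertex-homogeneous finite simplicial complex. Then the core of K is vertex-homogeneous and is simplicially isomorphic to the square nerve N²(K). -/

import Mathlib

/- Theory of strong homotopy types of finite simplicial complexes
   (Barmak–Minian), basic definitions. -/

open Classical

namespace StrongHomotopy

/-- A finite abstract simplicial complex with vertices from the ambient type `V`:
a finite family of nonempty finite subsets of `V`, closed under nonempty subsets.
(All singletons of vertices actually used are faces, by downward closure.) -/
structure Cplx (V : Type) where
  faces : Finset (Finset V)
  nonempty_of_mem : ∀ ⦃σ : Finset V⦄, σ ∈ faces → σ.Nonempty
  down_closed : ∀ ⦃σ τ : Finset V⦄, σ ∈ faces → τ ⊆ σ → τ.Nonempty → τ ∈ faces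

variable {V W : Type}

/-- `v` is a vertex of `K`. -/
def IsVertex (K : Cplx V) (v : V) : Prop := {v} ∈ K.faces

noncomputable section

/-- The set of faces of the link of `v` in `K`. -/
def link (K : Cplx V) (v : V) : Finset (Finset V) :=
  K.faces.filter fun σ => v ∉ σ ∧ insert v σ ∈ K.faces

/-- A family of faces is a simplicial cone with apex `a`. -/
def IsConeWithApex (F : Finset (Finset V)) (a : V) : Prop :=
  {a} ∈ F ∧ ∀ σ ∈ F, insert a σ ∈ F

/-- A family of faces is a simplicial cone. -/
def IsCone (F : Finset (Finset V)) : Prop := ∃ a, IsConeWithApex F a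

/-- `v` is dominated by `v'` in `K`: the link of `v` is a cone with apex `v'`. -/
def DominatedBy (K : Cplx V) (v v' : V) : Prop := IsConeWithApex (link K v) v'

/-- `v` is a dominated vertex of `K`: its link is a simplicial cone. -/
def Dominated (K : Cplx V) (v : V) : Prop := IsCone (link K v)

/-- Deletion `K ∖ v`: the full subcomplex spanned by the vertices other than `v`. -/
def delete (K : Cplx V) (v : V) : Cplx V where
  faces := K.faces.filter fun σ => v ∉ σ
  nonempty_of_mem := fun σ h => K.nonempty_of_mem (Finset.mem_filter.mp h).1
  down_closed := by
    intro σ τ hσ hsub hne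
    rw [Finset.mem_filter] at hσ ⊢
    exact ⟨K.down_closed hσ.1 hsub hne, fun hv => hσ.2 (hsub hv)⟩

/-- The link of a vertex, as a simplicial complex. -/
def linkCplx (K : Cplx V) (v : V) : Cplx V where
  faces := link K v
  nonempty_of_mem := fun σ h => K.nonempty_of_mem (Finset.mem_filter.mp h).1
  down_closed := by
    intro σ τ hσ hsub hne
    simp only [link, Finset.mem_filter] at hσ ⊢
    refine ⟨K.down_closed hσ.1 hsub hne, fun hv => hσ.2.1 (hsub hv), ?_⟩
    exact K.down_closed hσ.2.2 (Finset.insert_subset_insert v hsub)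
      ⟨v, Finset.mem_insert_self v τ⟩

/-- Elementary strong collapse: deletion of a dominated vertex. -/
def ElemStrongCollapse (K L : Cplx V) : Prop := ∃ v, Dominated K v ∧ L = delete K v

/-- `K` strong collapses to `L` (a sequence of elementary strong collapses). -/
def StrongCollapses : Cplx V → Cplx V → Prop := Relation.ReflTransGen ElemStrongCollapse

/-- The complex with a single vertex `v`. -/
def pt (v : V) : Cplx V where
  faces := {{v}}
  nonempty_of_mem := by
    intro σ h
    rw [Finset.mem_singleton] at h
    subst h
    exact ⟨v, Finset.mem_singleton_self v⟩
  down_closed := by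
    intro σ τ hσ hsub hne
    rw [Finset.mem_singleton] at hσ ⊢
    subst hσ
    rcases Finset.subset_singleton_iff.mp hsub with h | h
    · exact absurd h (Finset.nonempty_iff_ne_empty.mp hne)
    · exact h

/-- `K` is strong collapsible: it strong collapses to a single vertex. -/
def StrongCollapsible (K : Cplx V) : Prop := ∃ v, StrongCollapses K (pt v)

/-- A minimal complex: no dominated vertices. -/
def MinimalCplx (K : Cplx V) : Prop := ∀ v, ¬ Dominated K v

/-- A vertex map is simplicial if it sends faces to faces. -/
def IsSimplicial (K : Cplx V) (L : Cplx W) (f : V → W) : Prop :=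
  ∀ σ ∈ K.faces, σ.image f ∈ L.faces

/-- Two vertex maps are contiguous. -/
def Contiguous (K : Cplx V) (L : Cplx W) (f g : V → W) : Prop :=
  ∀ σ ∈ K.faces, σ.image f ∪ σ.image g ∈ L.faces

/-- `f` and `g` lie in the same contiguity class: they are joined by
a finite chain of (pairwise contiguous) maps. -/
def ContigClass (K : Cplx V) (L : Cplx W) : (V → W) → (V → W) → Prop :=
  Relation.ReflTransGen (Contiguous K L)

/-- A strong equivalence of simplicial complexes. -/
def StrongEquiv (K : Cplx V) (L : Cplx W) (f : V → W) : Prop :=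
  IsSimplicial K L f ∧ ∃ g : W → V, IsSimplicial L K g ∧
    ContigClass K K (g ∘ f) id ∧ ContigClass L L (f ∘ g) id

/-- `f` is a simplicial isomorphism from `K` to `L`: a simplicial map,
injective on vertices, inducing a bijection on faces. -/
def IsIsoMap (K : Cplx V) (L : Cplx W) (f : V → W) : Prop :=
  IsSimplicial K L f ∧ Set.InjOn f {v | IsVertex K v} ∧
    K.faces.image (fun σ => σ.image f) = L.faces

/-- `K` and `L` are simplicially isomorphic. -/
def Isomorphic (K : Cplx V) (L : Cplx W) : Prop := ∃ f, IsIsoMap K L f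

/-- `L` is a subcomplex of `K`. -/
def Subcplx (L K : Cplx V) : Prop := L.faces ⊆ K.faces

/-- `L` is a full subcomplex of `K`. -/
def IsFullSub (L K : Cplx V) : Prop :=
  L.faces ⊆ K.faces ∧ ∀ σ ∈ K.faces, (∀ v ∈ σ, IsVertex L v) → σ ∈ L.faces

/-- `K₀` is a core of `K`: a minimal complex to which `K` strong collapses. -/
def IsCore (K K₀ : Cplx V) : Prop := MinimalCplx K₀ ∧ StrongCollapses K K₀

/-- Same strong homotopy type: joined by a finite sequence of strong collapses,
strong expansions and simplicial isomorphisms. (In the abstract setting, where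
new vertices may be created freely, isomorphisms are generated by collapses and
expansions; over a fixed ambient vertex type they must be added as moves.) -/
def SameSHT (K L : Cplx V) : Prop :=
  Relation.ReflTransGen
    (fun A B => ElemStrongCollapse A B ∨ ElemStrongCollapse B A ∨ Isomorphic A B) K L

/-- `K` is vertex-homogeneous: its automorphism group acts transitively on vertices. -/
def VertexHomog (K : Cplx V) : Prop :=
  ∀ v w, IsVertex K v → IsVertex K w → ∃ φ : V → V, IsIsoMap K K φ ∧ φ v = w

/-! ### The nerve -/

/-- The maximal faces of `K`. -/
def maxFaces (K : Cplx V) : Finset (Finset V) :=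
  K.faces.filter fun σ => ∀ τ ∈ K.faces, σ ⊆ τ → σ = τ

/-- The nerve of `K`: vertices are the maximal simplices of `K`; a nonempty set
of maximal simplices is a face iff the simplices have a common vertex. -/
def nerve (K : Cplx V) : Cplx (Finset V) where
  faces := (maxFaces K).powerset.filter fun S => S.Nonempty ∧ ∃ v, ∀ σ ∈ S, v ∈ σ
  nonempty_of_mem := fun S h => (Finset.mem_filter.mp h).2.1
  down_closed := by
    intro S T hS hsub hne
    rw [Finset.mem_filter, Finset.mem_powerset] at hS ⊢
    obtain ⟨hpow, -, v, hv⟩ := hS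
    exact ⟨hsub.trans hpow, hne, v, fun σ hσ => hv σ (hsub hσ)⟩

/-- Iterated ambient vertex types for iterated nerves. -/
def iterV (V : Type) : ℕ → Type := fun n => Nat.rec V (fun _ T => Finset T) n

/-- The iterated nerve `Nⁿ(K)` (with `N⁰(K) = K`). -/
def iterNerve (K : Cplx V) : (n : ℕ) → Cplx (iterV V n)
  | 0 => K
  | n + 1 => nerve (iterNerve K n)

/-- A complex consists of a single vertex. -/
def IsPoint (K : Cplx V) : Prop := ∃ v, K.faces = {{v}}

/-! ### Joins -/

/-- The left part of a set of vertices of `V ⊕ W`. -/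
def lefts (ρ : Finset (V ⊕ W)) : Finset V :=
  ρ.preimage Sum.inl Sum.inl_injective.injOn

/-- The right part of a set of vertices of `V ⊕ W`. -/
def rights (ρ : Finset (V ⊕ W)) : Finset W :=
  ρ.preimage Sum.inr Sum.inr_injective.injOn

lemma lefts_union_rights (ρ : Finset (V ⊕ W)) :
    (lefts ρ).image Sum.inl ∪ (rights ρ).image Sum.inr = ρ := by
  ext x
  cases x with
  | inl v => simp [lefts, rights]
  | inr w => simp [lefts, rights]

lemma lefts_eq (σ : Finset V) (τ : Finset W) :
    lefts (σ.image Sum.inl ∪ τ.image Sum.inr) = σ := by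
  ext v; simp [lefts]

lemma rights_eq (σ : Finset V) (τ : Finset W) :
    rights (σ.image Sum.inl ∪ τ.image Sum.inr) = τ := by
  ext w; simp [rights]

/-- The faces of the join `K * L`. -/
def joinFaces (K : Cplx V) (L : Cplx W) : Finset (Finset (V ⊕ W)) :=
  (((insert ∅ K.faces) ×ˢ (insert ∅ L.faces)).image
    (fun p => p.1.image Sum.inl ∪ p.2.image Sum.inr)).erase ∅

lemma mem_joinFaces {K : Cplx V} {L : Cplx W} {ρ : Finset (V ⊕ W)} :
    ρ ∈ joinFaces K L ↔
      ρ.Nonempty ∧ lefts ρ ∈ insert ∅ K.faces ∧ rights ρ ∈ insert ∅ L.faces := by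
  unfold joinFaces
  constructor
  · intro h
    have hne : ρ ≠ ∅ := Finset.ne_of_mem_erase h
    have h' := Finset.mem_of_mem_erase h
    rw [Finset.mem_image] at h'
    obtain ⟨p, hp, hρ⟩ := h'
    rw [Finset.mem_product] at hp
    subst hρ
    rw [lefts_eq, rights_eq]
    exact ⟨Finset.nonempty_iff_ne_empty.mpr hne, hp.1, hp.2⟩
  · rintro ⟨hne, hl, hr⟩
    apply Finset.mem_erase.mpr
    refine ⟨Finset.nonempty_iff_ne_empty.mp hne, ?_⟩
    rw [Finset.mem_image]
    exact ⟨(lefts ρ, rights ρ), Finset.mem_product.mpr ⟨hl, hr⟩, lefts_union_rights ρ⟩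

/-- The simplicial join `K * L` of complexes with disjoint vertex sets
(realized on the disjoint sum of the ambient types). -/
def join (K : Cplx V) (L : Cplx W) : Cplx (V ⊕ W) where
  faces := joinFaces K L
  nonempty_of_mem := fun ρ h => (mem_joinFaces.mp h).1
  down_closed := by
    intro ρ ρ' hρ hsub hne
    obtain ⟨-, hl, hr⟩ := mem_joinFaces.mp hρ
    apply mem_joinFaces.mpr
    refine ⟨hne, ?_, ?_⟩
    · rcases Finset.eq_empty_or_nonempty (lefts ρ') with h0 | h1
      · rw [h0]; exact Finset.mem_insert_self _ _
      · have hsubl : lefts ρ' ⊆ lefts ρ := by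
          intro v hv
          simp only [lefts, Finset.mem_preimage] at hv ⊢
          exact hsub hv
        have hKf : lefts ρ ∈ K.faces := by
          rcases Finset.mem_insert.mp hl with h | h
          · obtain ⟨v, hv⟩ := h1
            exact absurd (hsubl hv) (by simp [h])
          · exact h
        exact Finset.mem_insert.mpr (Or.inr (K.down_closed hKf hsubl h1))
    · rcases Finset.eq_empty_or_nonempty (rights ρ') with h0 | h1
      · rw [h0]; exact Finset.mem_insert_self _ _
      · have hsubr : rights ρ' ⊆ rights ρ := by
          intro w hw
          simp only [rights, Finset.mem_preimage] at hw ⊢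
          exact hsub hw
        have hLf : rights ρ ∈ L.faces := by
          rcases Finset.mem_insert.mp hr with h | h
          · obtain ⟨w, hw⟩ := h1
            exact absurd (hsubr hw) (by simp [h])
          · exact h
        exact Finset.mem_insert.mpr (Or.inr (L.down_closed hLf hsubr h1))

/-! ### Finite posets (finite T₀-spaces) -/

variable {P : Type} [PartialOrder P]

/-- `x` is a beat point of the finite poset `X`: the points of `X` strictly below
`x` have a maximum, or the points of `X` strictly above `x` have a minimum. -/
def BeatPoint (X : Finset P) (x : P) : Prop :=
  x ∈ X ∧ ((∃ y ∈ X, y < x ∧ ∀ z ∈ X, z < x → z ≤ y) ∨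
    (∃ y ∈ X, x < y ∧ ∀ z ∈ X, x < z → y ≤ z))

/-- Elementary strong collapse of finite posets: removal of a beat point. -/
def ElemPosetStrongCollapse (X Y : Finset P) : Prop :=
  ∃ x, BeatPoint X x ∧ Y = X.erase x

/-- Strong collapse of finite posets: successive removal of beat points. -/
def PosetStrongCollapses : Finset P → Finset P → Prop :=
  Relation.ReflTransGen ElemPosetStrongCollapse

/-- A finite poset is contractible iff it strong collapses to a point (Stong). -/
def PosetContractible (X : Finset P) : Prop := ∃ x, PosetStrongCollapses X {x}

/-- The link `Ĉ_x` of `x` in `X`: the points of `X` comparable with `x` and distinct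
from it. -/
def posetLink (X : Finset P) (x : P) : Finset P :=
  X.filter fun y => y < x ∨ x < y

/-- `x` is a weak point of `X`: its link is contractible. -/
def WeakPoint (X : Finset P) (x : P) : Prop :=
  x ∈ X ∧ PosetContractible (posetLink X x)

/-- Collapse of finite posets: successive removal of weak points. -/
def PosetCollapses : Finset P → Finset P → Prop :=
  Relation.ReflTransGen (fun X Y => ∃ x, WeakPoint X x ∧ Y = X.erase x)

/-- A finite poset is collapsible if it collapses to a point. -/
def PosetCollapsible (X : Finset P) : Prop := ∃ x, PosetCollapses X {x}

/-- The order complex of a finite poset: faces are the nonempty chains. -/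
def orderCplx (X : Finset P) : Cplx P where
  faces := X.powerset.filter fun σ => σ.Nonempty ∧ IsChain (· ≤ ·) (σ : Set P)
  nonempty_of_mem := fun σ h => (Finset.mem_filter.mp h).2.1
  down_closed := by
    intro σ τ hσ hsub hne
    rw [Finset.mem_filter, Finset.mem_powerset] at hσ ⊢
    exact ⟨hsub.trans hσ.1, hne, hσ.2.2.mono (Finset.coe_subset.mpr hsub)⟩

/-- The barycentric subdivision of a complex: the order complex of its poset of
faces (the face poset, ordered by inclusion). -/
def sd (K : Cplx V) : Cplx (Finset V) := orderCplx K.faces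

/-- Homotopy of order-preserving maps between finite posets: being joined by a
fence in the pointwise order. -/
def PosetHomotopic {X Y : Type} [Preorder X] [Preorder Y] (f g : X →o Y) : Prop :=
  Relation.ReflTransGen (fun p q : X →o Y => p ≤ q ∨ q ≤ p) f g

/-- Homotopy equivalence of finite posets. -/
def PosetHomotopyEquiv (X Y : Type) [Preorder X] [Preorder Y] : Prop :=
  ∃ (f : X →o Y) (g : Y →o X),
    PosetHomotopic (g.comp f) OrderHom.id ∧ PosetHomotopic (f.comp g) OrderHom.id

/-! ### Classical collapses and n-collapses -/

/-- Elementary (classical) simplicial collapse: removal of a free face `σ`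
together with the unique face `τ` properly containing it. -/
def ElemCollapse (K L : Cplx V) : Prop :=
  ∃ σ τ : Finset V, σ ∈ K.faces ∧ τ ∈ K.faces ∧ σ ⊂ τ ∧
    (∀ ρ ∈ K.faces, σ ⊂ ρ → ρ = τ) ∧ L.faces = K.faces \ {σ, τ}

/-- Classical simplicial collapse. -/
def Collapses : Cplx V → Cplx V → Prop := Relation.ReflTransGen ElemCollapse

/-- A complex is collapsible if it collapses to a point. -/
def Collapsible (K : Cplx V) : Prop := ∃ v, Collapses K (pt v)

/-- `n`-collapses: a `0`-collapse is a strong collapse; an `(n+1)`-collapse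
successively deletes vertices whose links are `n`-collapsible. -/
def NCollapses : ℕ → Cplx V → Cplx V → Prop
  | 0 => StrongCollapses
  | n + 1 => Relation.ReflTransGen
      (fun K L => ∃ v, (∃ w, NCollapses n (linkCplx K v) (pt w)) ∧ L = delete K v)

/-- `K` is `n`-collapsible: it `n`-collapses to a single vertex. -/
def NCollapsible (n : ℕ) (K : Cplx V) : Prop := ∃ v, NCollapses n K (pt v)

/-- `K` is non-evasive: it is `n`-collapsible for some `n`. -/
def NonEvasive (K : Cplx V) : Prop := ∃ n, NCollapsible n K

end

/-! ### Auxiliary material for Statement 19 -/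

noncomputable section Aux19

variable {V W U : Type}

theorem Cplx.ext' {K L : Cplx V} (h : K.faces = L.faces) : K = L := by
  cases K; cases L; simpa using h

lemma vertex_of_mem {K : Cplx V} {σ : Finset V} (hσ : σ ∈ K.faces) {v : V} (hv : v ∈ σ) :
    IsVertex K v :=
  K.down_closed hσ (Finset.singleton_subset_iff.mpr hv) ⟨v, Finset.mem_singleton_self v⟩

lemma mem_maxFaces' {K : Cplx V} {τ : Finset V} :
    τ ∈ maxFaces K ↔ τ ∈ K.faces ∧ ∀ ρ ∈ K.faces, τ ⊆ ρ → τ = ρ := by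
  unfold maxFaces; exact Finset.mem_filter

lemma exists_max {K : Cplx V} {σ : Finset V} (hσ : σ ∈ K.faces) :
    ∃ τ ∈ maxFaces K, σ ⊆ τ := by
  classical
  obtain ⟨τ, hτ, hmax⟩ := Finset.exists_max_image (K.faces.filter fun ρ => σ ⊆ ρ)
    (fun ρ => ρ.card) ⟨σ, Finset.mem_filter.mpr ⟨hσ, Finset.Subset.refl σ⟩⟩
  rw [Finset.mem_filter] at hτ
  refine ⟨τ, mem_maxFaces'.mpr ⟨hτ.1, ?_⟩, hτ.2⟩
  intro ρ hρ hsub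
  exact Finset.eq_of_subset_of_card_le hsub
    (hmax ρ (Finset.mem_filter.mpr ⟨hρ, hτ.2.trans hsub⟩))

/-- The family of maximal faces of `K` containing `v`. -/
def Mv (K : Cplx V) (v : V) : Finset (Finset V) :=
  (maxFaces K).filter fun τ => v ∈ τ

lemma mem_Mv {K : Cplx V} {v : V} {τ : Finset V} :
    τ ∈ Mv K v ↔ τ ∈ maxFaces K ∧ v ∈ τ := Finset.mem_filter

lemma mem_link' {K : Cplx V} {v : V} {σ : Finset V} :
    σ ∈ link K v ↔ σ ∈ K.faces ∧ v ∉ σ ∧ insert v σ ∈ K.faces := Finset.mem_filter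

lemma dom_ne {K : Cplx V} {v a : V} (h : DominatedBy K v a) : a ≠ v := by
  have hv := (mem_link'.mp h.1).2.1
  intro e
  exact hv (by simp [e])

lemma dom_subset {K : Cplx V} {v a : V} (h : DominatedBy K v a) :
    ∀ τ ∈ maxFaces K, v ∈ τ → a ∈ τ := by
  intro τ hτ hv
  obtain ⟨hτf, hτmax⟩ := mem_maxFaces'.mp hτ
  by_cases he : (τ.erase v).Nonempty
  · have hlink : τ.erase v ∈ link K v := by
      rw [mem_link']
      refine ⟨K.down_closed hτf (Finset.erase_subset v τ) he, Finset.notMem_erase v τ, ?_⟩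
      rwa [Finset.insert_erase hv]
    have h2 := h.2 _ hlink
    rw [mem_link'] at h2
    have : insert v (insert a (τ.erase v)) = insert a τ := by
      rw [Finset.insert_comm, Finset.insert_erase hv]
    have hface : insert a τ ∈ K.faces := this ▸ h2.2.2
    have := hτmax _ hface (Finset.subset_insert a τ)
    rw [this]; exact Finset.mem_insert_self a τ
  · have hτv : τ = {v} := by
      rw [Finset.not_nonempty_iff_eq_empty] at he
      ext x
      simp only [Finset.mem_singleton]
      constructor
      · intro hx
        by_contra hne
        exact absurd (Finset.mem_erase.mpr ⟨hne, hx⟩) (by simp [he])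
      · rintro rfl; exact hv
    have h1 := h.1
    rw [mem_link'] at h1
    have : insert v {a} ∈ K.faces := h1.2.2
    have := hτmax _ this (by rw [hτv]; intro x hx; simp at hx; subst hx; simp)
    rw [hτv] at this ⊢
    rw [this]; simp

lemma mem_nerve' {K : Cplx V} {S : Finset (Finset V)} :
    S ∈ (nerve K).faces ↔ S ⊆ maxFaces K ∧ S.Nonempty ∧ ∃ v, ∀ σ ∈ S, v ∈ σ := by
  unfold nerve
  rw [Finset.mem_filter, Finset.mem_powerset]

def vertexSet (K : Cplx V) : Finset V := K.faces.sup id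

lemma mem_vertexSet {K : Cplx V} {v : V} : v ∈ vertexSet K ↔ IsVertex K v := by
  unfold vertexSet
  rw [Finset.mem_sup]
  constructor
  · rintro ⟨σ, hσ, hv⟩; exact vertex_of_mem hσ hv
  · intro h; exact ⟨{v}, h, Finset.mem_singleton_self v⟩

lemma iso_vertex {A : Cplx V} {B : Cplx W} {f : V → W} (h : IsIsoMap A B f)
    {v : V} (hv : IsVertex A v) : IsVertex B (f v) := by
  have := h.1 _ hv
  simpa [IsVertex] using this

lemma iso_subset_of_image_subset {A : Cplx V} {f : V → W}
    (hinj : Set.InjOn f {v | IsVertex A v})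
    {σ τ : Finset V} (hσ : σ ∈ A.faces) (hτ : τ ∈ A.faces)
    (h : σ.image f ⊆ τ.image f) : σ ⊆ τ := by
  intro x hx
  obtain ⟨y, hy, he⟩ := Finset.mem_image.mp (h (Finset.mem_image_of_mem f hx))
  have : y = x := hinj (vertex_of_mem hτ hy) (vertex_of_mem hσ hx) he
  exact this ▸ hy

lemma iso_max {A : Cplx V} {B : Cplx W} {f : V → W} (h : IsIsoMap A B f)
    {τ : Finset V} (hτ : τ ∈ maxFaces A) : τ.image f ∈ maxFaces B := by
  obtain ⟨hτf, hτmax⟩ := mem_maxFaces'.mp hτ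
  refine mem_maxFaces'.mpr ⟨h.1 _ hτf, ?_⟩
  intro ρ hρ hsub
  have : ρ ∈ A.faces.image (fun σ => σ.image f) := h.2.2 ▸ hρ
  obtain ⟨σ, hσ, rfl⟩ := Finset.mem_image.mp this
  rw [hτmax σ hσ (iso_subset_of_image_subset h.2.1 hτf hσ hsub)]

lemma iso_max_pre {A : Cplx V} {B : Cplx W} {f : V → W} (h : IsIsoMap A B f)
    {τ : Finset W} (hτ : τ ∈ maxFaces B) : ∃ σ ∈ maxFaces A, σ.image f = τ := by
  obtain ⟨hτf, hτmax⟩ := mem_maxFaces'.mp hτ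
  have : τ ∈ A.faces.image (fun σ => σ.image f) := h.2.2 ▸ hτf
  obtain ⟨σ, hσ, rfl⟩ := Finset.mem_image.mp this
  refine ⟨σ, mem_maxFaces'.mpr ⟨hσ, ?_⟩, rfl⟩
  intro ρ hρ hsub
  have h1 : σ.image f ⊆ ρ.image f := Finset.image_subset_image hsub
  have h2 := hτmax _ (h.1 _ hρ) h1
  exact Finset.Subset.antisymm hsub
    (iso_subset_of_image_subset h.2.1 hρ hσ (le_of_eq h2.symm))

lemma Mv_image_le {A : Cplx V} {f : V → V} (h : IsIsoMap A A f) {v w : V}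
    (hv : IsVertex A v) (hw : IsVertex A w) (hsub : Mv A v ⊆ Mv A w) :
    Mv A (f v) ⊆ Mv A (f w) := by
  intro τ hτ
  rw [mem_Mv] at hτ ⊢
  obtain ⟨hmax, hfv⟩ := hτ
  obtain ⟨σ, hσmax, rfl⟩ := iso_max_pre h hmax
  have hvσ : v ∈ σ := by
    obtain ⟨y, hy, he⟩ := Finset.mem_image.mp hfv
    have : y = v := h.2.1 (vertex_of_mem ((mem_maxFaces'.mp hσmax).1) hy) hv he
    exact this ▸ hy
  have := hsub (mem_Mv.mpr ⟨hσmax, hvσ⟩)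
  exact ⟨hmax, Finset.mem_image_of_mem f (mem_Mv.mp this).2⟩

lemma Mv_le_of_image {A : Cplx V} {f : V → V} (h : IsIsoMap A A f) {v w : V}
    (hw : IsVertex A w) (hsub : Mv A (f v) ⊆ Mv A (f w)) :
    Mv A v ⊆ Mv A w := by
  intro τ hτ
  rw [mem_Mv] at hτ ⊢
  obtain ⟨hmax, hvτ⟩ := hτ
  have h1 : τ.image f ∈ Mv A (f v) :=
    mem_Mv.mpr ⟨iso_max h hmax, Finset.mem_image_of_mem f hvτ⟩
  obtain ⟨y, hy, he⟩ := Finset.mem_image.mp (mem_Mv.mp (hsub h1)).2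
  have : y = w := h.2.1 (vertex_of_mem ((mem_maxFaces'.mp hmax).1) hy) hw he
  exact ⟨hmax, this ▸ hy⟩

lemma Mv_symm {K : Cplx V} (hK : K.faces.Nonempty) (hhom : VertexHomog K) :
    ∀ v w, IsVertex K v → IsVertex K w → Mv K v ⊆ Mv K w → Mv K w ⊆ Mv K v := by
  classical
  obtain ⟨σ₀, hσ₀⟩ := hK
  obtain ⟨x₀, hx₀⟩ := K.nonempty_of_mem hσ₀
  have hx₀v : IsVertex K x₀ := vertex_of_mem hσ₀ hx₀
  have hTne : ((vertexSet K).image (Mv K)).Nonempty :=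
    ⟨Mv K x₀, Finset.mem_image_of_mem _ (mem_vertexSet.mpr hx₀v)⟩
  obtain ⟨Mmax, hMmem, hMmax'⟩ := Finset.exists_maximal hTne
  have hMmax : ∀ x ∈ (vertexSet K).image (Mv K), ¬ Mmax < x := fun x hx hlt =>
    lt_irrefl _ (lt_of_lt_of_le hlt (hMmax' hx hlt.le))
  obtain ⟨v₀, hv₀mem, hv₀eq⟩ := Finset.mem_image.mp hMmem
  have hv₀ : IsVertex K v₀ := mem_vertexSet.mp hv₀mem
  intro v w hv hw hsub
  obtain ⟨φ, hφ, hφv⟩ := hhom v v₀ hv hv₀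
  have h1 : Mv K (φ v) ⊆ Mv K (φ w) := Mv_image_le hφ hv hw hsub
  rw [hφv, hv₀eq] at h1
  have hφw : IsVertex K (φ w) := iso_vertex hφ hw
  have hmem : Mv K (φ w) ∈ (vertexSet K).image (Mv K) :=
    Finset.mem_image_of_mem _ (mem_vertexSet.mpr hφw)
  have heq : Mv K (φ w) = Mmax := by
    by_contra hne
    exact hMmax _ hmem (lt_of_le_of_ne (Finset.le_iff_subset.mpr h1) (Ne.symm hne))
  have h2 : Mv K (φ w) ⊆ Mv K (φ v) := by
    rw [heq, hφv, hv₀eq]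
  exact Mv_le_of_image hφ hv h2

/-- Full subcomplex of `K` avoiding the vertex set `S`. -/
def res (K : Cplx V) (S : Finset V) : Cplx V where
  faces := K.faces.filter fun σ => ∀ u ∈ S, u ∉ σ
  nonempty_of_mem := fun σ h => K.nonempty_of_mem (Finset.mem_filter.mp h).1
  down_closed := by
    intro σ τ hσ hsub hne
    rw [Finset.mem_filter] at hσ ⊢
    exact ⟨K.down_closed hσ.1 hsub hne, fun u hu hx => hσ.2 u hu (hsub hx)⟩

lemma mem_res {K : Cplx V} {S σ : Finset V} :
    σ ∈ (res K S).faces ↔ σ ∈ K.faces ∧ ∀ u ∈ S, u ∉ σ := Finset.mem_filter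

lemma res_empty (K : Cplx V) : res K ∅ = K := by
  apply Cplx.ext'
  simp [res]

lemma res_insert (K : Cplx V) (u : V) (S : Finset V) :
    res K (insert u S) = delete (res K S) u := by
  apply Cplx.ext'
  ext σ
  simp only [mem_res, delete, Finset.mem_filter, Finset.mem_insert]
  constructor
  · rintro ⟨h1, h2⟩
    exact ⟨⟨h1, fun x hx => h2 x (Or.inr hx)⟩, h2 u (Or.inl rfl)⟩
  · rintro ⟨⟨h1, h2⟩, h3⟩
    refine ⟨h1, ?_⟩
    rintro x (rfl | hx)
    · exact h3
    · exact h2 x hx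

lemma collapses_res (K : Cplx V) (S : Finset V)
    (hS : ∀ u ∈ S, IsVertex K u ∧
      ∃ r, IsVertex K r ∧ r ∉ S ∧ r ≠ u ∧ Mv K u ⊆ Mv K r) :
    StrongCollapses K (res K S) := by
  classical
  induction S using Finset.induction_on with
  | empty => rw [res_empty]; exact Relation.ReflTransGen.refl
  | @insert u S' hu ih =>
    have hS' : ∀ u' ∈ S', IsVertex K u' ∧
        ∃ r, IsVertex K r ∧ r ∉ S' ∧ r ≠ u' ∧ Mv K u' ⊆ Mv K r := by
      intro u' hu'
      obtain ⟨h1, r, h2, h3, h4, h5⟩ := hS u' (Finset.mem_insert_of_mem hu')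
      exact ⟨h1, r, h2, fun hr => h3 (Finset.mem_insert_of_mem hr), h4, h5⟩
    obtain ⟨huv, r, hrv, hrS, hru, hMsub⟩ := hS u (Finset.mem_insert_self u S')
    have hrS' : r ∉ S' := fun hr => hrS (Finset.mem_insert_of_mem hr)
    have hinMv : ∀ {τ : Finset V}, τ ∈ maxFaces K → u ∈ τ → r ∈ τ := by
      intro τ hτ huτ
      exact (mem_Mv.mp (hMsub (mem_Mv.mpr ⟨hτ, huτ⟩))).2
    have hdom : DominatedBy (res K S') u r := by
      constructor
      · -- {r} ∈ link (res K S') u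
        obtain ⟨τ, hτmax, hτsub⟩ := exists_max huv
        have huτ : u ∈ τ := hτsub (Finset.mem_singleton_self u)
        have hrτ : r ∈ τ := hinMv hτmax huτ
        have hτf := (mem_maxFaces'.mp hτmax).1
        have hpair : insert u {r} ∈ K.faces := by
          apply K.down_closed hτf _ ⟨u, Finset.mem_insert_self u {r}⟩
          intro x hx
          rcases Finset.mem_insert.mp hx with rfl | hx
          · exact huτ
          · rw [Finset.mem_singleton] at hx; subst hx; exact hrτ
        rw [mem_link']
        refine ⟨mem_res.mpr ⟨hrv, ?_⟩, ?_, mem_res.mpr ⟨hpair, ?_⟩⟩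
        · intro x hx hx2
          rw [Finset.mem_singleton] at hx2; subst hx2; exact hrS' hx
        · rw [Finset.mem_singleton]; exact fun e => hru e.symm
        · intro x hx hx2
          rcases Finset.mem_insert.mp hx2 with rfl | hx2
          · exact hu hx
          · rw [Finset.mem_singleton] at hx2; subst hx2; exact hrS' hx
      · -- cone condition
        intro σ hσ
        rw [mem_link'] at hσ ⊢
        obtain ⟨hσres, huσ, hins⟩ := hσ
        obtain ⟨hσK, hσav⟩ := mem_res.mp hσres
        obtain ⟨hinsK, hinsav⟩ := mem_res.mp hins
        obtain ⟨τ, hτmax, hτsub⟩ := exists_max hinsK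
        have huτ : u ∈ τ := hτsub (Finset.mem_insert_self u σ)
        have hrτ : r ∈ τ := hinMv hτmax huτ
        have hτf := (mem_maxFaces'.mp hτmax).1
        have hbig : insert r (insert u σ) ∈ K.faces := by
          apply K.down_closed hτf _ ⟨r, Finset.mem_insert_self r _⟩
          intro x hx
          rcases Finset.mem_insert.mp hx with rfl | hx
          · exact hrτ
          · exact hτsub hx
        have hbigav : ∀ x ∈ S', x ∉ insert r (insert u σ) := by
          intro x hx hx2
          rcases Finset.mem_insert.mp hx2 with rfl | hx2
          · exact hrS' hx
          · exact hinsav x hx hx2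
        have hsmall : insert r σ ∈ K.faces :=
          K.down_closed hbig (Finset.insert_subset_insert r (Finset.subset_insert u σ))
            ⟨r, Finset.mem_insert_self r σ⟩
        refine ⟨mem_res.mpr ⟨hsmall, ?_⟩, ?_, ?_⟩
        · intro x hx hx2
          rcases Finset.mem_insert.mp hx2 with rfl | hx2
          · exact hrS' hx
          · exact hσav x hx hx2
        · intro hx
          rcases Finset.mem_insert.mp hx with rfl | hx
          · exact hru rfl
          · exact huσ hx
        · rw [Finset.insert_comm]
          exact mem_res.mpr ⟨hbig, hbigav⟩
    refine Relation.ReflTransGen.tail (ih hS') ⟨u, ⟨r, hdom⟩, res_insert K u S'⟩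

lemma exists_reps (K : Cplx V) (A : Finset V) :
    ∃ R : Finset V, R ⊆ A ∧ (∀ u ∈ A, ∃ r ∈ R, Mv K r = Mv K u) ∧
      (∀ r ∈ R, ∀ r' ∈ R, Mv K r = Mv K r' → r = r') := by
  classical
  induction A using Finset.induction_on with
  | empty => exact ⟨∅, by simp, by simp, by simp⟩
  | @insert a A' ha ih =>
    obtain ⟨R, hR1, hR2, hR3⟩ := ih
    by_cases h : ∃ r ∈ R, Mv K r = Mv K a
    · refine ⟨R, hR1.trans (Finset.subset_insert a A'), ?_, hR3⟩
      intro u hu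
      rcases Finset.mem_insert.mp hu with rfl | hu
      · exact h
      · exact hR2 u hu
    · refine ⟨insert a R, Finset.insert_subset_insert a hR1, ?_, ?_⟩
      · intro u hu
        rcases Finset.mem_insert.mp hu with rfl | hu
        · exact ⟨u, Finset.mem_insert_self u R, rfl⟩
        · obtain ⟨r, hr, he⟩ := hR2 u hu
          exact ⟨r, Finset.mem_insert_of_mem hr, he⟩
      · intro r hr r' hr' he
        rcases Finset.mem_insert.mp hr with h1 | h1 <;>
          rcases Finset.mem_insert.mp hr' with h2 | h2
        · rw [h1, h2]
        · subst h1; exact absurd ⟨r', h2, he.symm⟩ h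
        · subst h2; exact absurd ⟨r, h1, he⟩ h
        · exact hR3 r h1 r' h2 he

lemma image_id_of_fix {f : V → V} {τ : Finset V} (h : ∀ x ∈ τ, f x = x) :
    τ.image f = τ := by
  ext x
  simp only [Finset.mem_image]
  constructor
  · rintro ⟨y, hy, he⟩
    subst he
    rw [h y hy]; exact hy
  · intro hx; exact ⟨x, hx, h x hx⟩

/-- The retraction collapsing `v` onto `a`. -/
def retr (v a : V) : V → V := fun x => if x = v then a else x

lemma retr_image_not_mem {v a : V} {σ : Finset V} (h : v ∉ σ) :
    σ.image (retr v a) = σ := by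
  apply image_id_of_fix
  intro x hx
  have hxv : ¬ x = v := fun e => h (e ▸ hx)
  show (if x = v then a else x) = x
  rw [if_neg hxv]

lemma retr_image_mem {v a : V} {σ : Finset V} (h : v ∈ σ) :
    σ.image (retr v a) = insert a (σ.erase v) := by
  ext x
  simp only [Finset.mem_image, Finset.mem_insert, Finset.mem_erase, retr]
  constructor
  · rintro ⟨y, hy, he⟩
    by_cases hyv : y = v
    · rw [if_pos hyv] at he; exact Or.inl he.symm
    · rw [if_neg hyv] at he; exact Or.inr ⟨he ▸ hyv, he ▸ hy⟩
  · rintro (rfl | ⟨hxv, hx⟩)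
    · exact ⟨v, h, if_pos rfl⟩
    · exact ⟨x, hx, if_neg hxv⟩

lemma erase_empty_case {v : V} {σ : Finset V} (hv : v ∈ σ)
    (he : ¬(σ.erase v).Nonempty) : σ = {v} := by
  rw [Finset.not_nonempty_iff_eq_empty] at he
  ext x
  simp only [Finset.mem_singleton]
  constructor
  · intro hx
    by_contra hne
    exact absurd (Finset.mem_erase.mpr ⟨hne, hx⟩) (by simp [he])
  · rintro rfl; exact hv

lemma dom_insert_face {K : Cplx V} {v a : V} (h : DominatedBy K v a)
    {σ : Finset V} (hσ : σ ∈ K.faces) (hv : v ∈ σ) : insert a σ ∈ K.faces := by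
  by_cases he : (σ.erase v).Nonempty
  · have hlink : σ.erase v ∈ link K v := mem_link'.mpr
      ⟨K.down_closed hσ (Finset.erase_subset v σ) he, Finset.notMem_erase v σ,
        by rwa [Finset.insert_erase hv]⟩
    have h2 := (mem_link'.mp (h.2 _ hlink)).2.2
    rwa [Finset.insert_comm, Finset.insert_erase hv] at h2
  · have hσv : σ = {v} := erase_empty_case hv he
    have h1 := (mem_link'.mp h.1).2.2
    rw [hσv]
    rwa [show (insert a {v} : Finset V) = insert v {a} from Finset.pair_comm a v]

lemma retr_simplicial {K : Cplx V} {v a : V} (h : DominatedBy K v a) :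
    IsSimplicial K (delete K v) (retr v a) := by
  intro σ hσ
  have hav : a ≠ v := dom_ne h
  by_cases hv : v ∈ σ
  · rw [retr_image_mem hv]
    rw [delete, Finset.mem_filter]
    constructor
    · apply K.down_closed (dom_insert_face h hσ hv)
      · intro x hx
        rcases Finset.mem_insert.mp hx with rfl | hx
        · exact Finset.mem_insert_self x σ
        · exact Finset.mem_insert_of_mem (Finset.mem_of_mem_erase hx)
      · exact ⟨a, Finset.mem_insert_self a _⟩
    · intro hx
      rcases Finset.mem_insert.mp hx with hx | hx
      · exact hav hx.symm
      · exact Finset.notMem_erase v σ hx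
  · rw [retr_image_not_mem hv]
    rw [delete, Finset.mem_filter]
    exact ⟨hσ, hv⟩

lemma retr_contig {K : Cplx V} {v a : V} (h : DominatedBy K v a) :
    Contiguous K K (retr v a) id := by
  intro σ hσ
  rw [Finset.image_id]
  by_cases hv : v ∈ σ
  · rw [retr_image_mem hv]
    have : insert a (σ.erase v) ∪ σ = insert a σ := by
      ext x
      simp only [Finset.mem_union, Finset.mem_insert, Finset.mem_erase]
      constructor
      · rintro ((rfl | ⟨_, hx⟩) | hx)
        · exact Or.inl rfl
        · exact Or.inr hx
        · exact Or.inr hx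
      · rintro (rfl | hx)
        · exact Or.inl (Or.inl rfl)
        · exact Or.inr hx
    rw [this]
    exact dom_insert_face h hσ hv
  · rw [retr_image_not_mem hv, Finset.union_self]
    exact hσ

lemma contig_lift {A : Cplx U} {B : Cplx W} {p q : W → W} {f : U → W} {g : W → U}
    (hpq : Contiguous B B p q) (hf : IsSimplicial A B f) (hg : IsSimplicial B A g) :
    Contiguous A A (fun x => g (p (f x))) (fun x => g (q (f x))) := by
  intro σ hσ
  have h3 := hg _ (hpq _ (hf _ hσ))
  rw [Finset.image_union] at h3
  have e1 : σ.image (fun x => g (p (f x))) = ((σ.image f).image p).image g := by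
    rw [Finset.image_image, Finset.image_image]; rfl
  have e2 : σ.image (fun x => g (q (f x))) = ((σ.image f).image q).image g := by
    rw [Finset.image_image, Finset.image_image]; rfl
  rw [e1, e2]
  exact h3

lemma contigclass_lift {A : Cplx U} {B : Cplx W} {p q : W → W} {f : U → W} {g : W → U}
    (h : ContigClass B B p q) (hf : IsSimplicial A B f) (hg : IsSimplicial B A g) :
    ContigClass A A (fun x => g (p (f x))) (fun x => g (q (f x))) := by
  induction h with
  | refl => exact Relation.ReflTransGen.refl
  | tail _ h2 ih => exact Relation.ReflTransGen.tail ih (contig_lift h2 hf hg)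

lemma subcplx_of_collapses {K L : Cplx V} (h : StrongCollapses K L) : Subcplx L K := by
  induction h with
  | refl => exact Finset.Subset.refl _
  | tail _ h2 ih =>
    obtain ⟨v, _, rfl⟩ := h2
    intro σ hσ
    exact ih (Finset.mem_filter.mp hσ).1

lemma collapses_data {K L : Cplx V} (h : StrongCollapses K L) :
    ∃ G : V → V, IsSimplicial K L G ∧ (∀ v, IsVertex L v → G v = v) ∧
      ContigClass K K G id := by
  induction h with
  | refl =>
    exact ⟨id, fun σ hσ => by simpa using hσ, fun v _ => rfl, Relation.ReflTransGen.refl⟩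
  | @tail M L' h1 h2 ih =>
    obtain ⟨G₁, hG₁s, hG₁fix, hG₁c⟩ := ih
    obtain ⟨v, ⟨a, hdom⟩, rfl⟩ := h2
    have hsub : Subcplx M K := subcplx_of_collapses h1
    have hids : IsSimplicial M K id := by
      intro σ hσ; rw [Finset.image_id]; exact hsub hσ
    refine ⟨fun x => retr v a (G₁ x), ?_, ?_, ?_⟩
    · intro σ hσ
      have := retr_simplicial hdom _ (hG₁s σ hσ)
      rwa [Finset.image_image] at this
    · intro w hw
      have hw' : {w} ∈ M.faces ∧ v ∉ ({w} : Finset V) := Finset.mem_filter.mp hw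
      have hwv : w ≠ v := fun e => hw'.2 (by simp [e])
      show retr v a (G₁ w) = w
      rw [hG₁fix w hw'.1, retr, if_neg hwv]
    · have hstep : Contiguous K K (fun x => retr v a (G₁ x)) (fun x => G₁ x) := by
        have := contig_lift (retr_contig hdom) hG₁s hids
        exact this
      exact Relation.ReflTransGen.head hstep hG₁c

lemma contig_eq_id {A : Cplx V} (hmin : MinimalCplx A) {f g : V → V}
    (h : Contiguous A A f g) (hg : ∀ v, IsVertex A v → g v = v) :
    ∀ v, IsVertex A v → f v = v := by
  intro v hv
  by_contra hne
  apply hmin v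
  refine ⟨f v, ?_, ?_⟩
  · have hu := h _ hv
    rw [Finset.image_singleton, Finset.image_singleton, hg v hv] at hu
    have hpair : insert v {f v} ∈ A.faces := by
      apply A.down_closed hu _ ⟨v, Finset.mem_insert_self v _⟩
      intro x hx
      rcases Finset.mem_insert.mp hx with rfl | hx
      · exact Finset.mem_union_right _ (Finset.mem_singleton_self x)
      · exact Finset.mem_union_left _ hx
    rw [mem_link']
    refine ⟨A.down_closed hpair (Finset.subset_insert v _)
      ⟨f v, Finset.mem_singleton_self _⟩, ?_, hpair⟩
    rw [Finset.mem_singleton]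
    exact fun e => hne e.symm
  · intro σ hσ
    rw [mem_link'] at hσ ⊢
    obtain ⟨hσf, hvσ, hins⟩ := hσ
    have hu := h _ hins
    have himg : (insert v σ).image g = insert v σ :=
      image_id_of_fix (fun x hx => hg x (vertex_of_mem hins hx))
    rw [himg] at hu
    have hbig : insert v (insert (f v) σ) ∈ A.faces := by
      apply A.down_closed hu _ ⟨v, Finset.mem_insert_self v _⟩
      intro x hx
      rcases Finset.mem_insert.mp hx with rfl | hx
      · exact Finset.mem_union_right _ (Finset.mem_insert_self x σ)
      · rcases Finset.mem_insert.mp hx with rfl | hx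
        · exact Finset.mem_union_left _
            (Finset.mem_image_of_mem f (Finset.mem_insert_self v σ))
        · exact Finset.mem_union_right _ (Finset.mem_insert_of_mem hx)
    refine ⟨A.down_closed hbig (Finset.subset_insert v _)
      ⟨f v, Finset.mem_insert_self _ _⟩, ?_, hbig⟩
    intro hx
    rcases Finset.mem_insert.mp hx with hx | hx
    · exact hne hx.symm
    · exact hvσ hx

lemma contigclass_eq_id {A : Cplx V} (hmin : MinimalCplx A) {f : V → V}
    (h : ContigClass A A f id) : ∀ v, IsVertex A v → f v = v := by
  induction h using Relation.ReflTransGen.head_induction_on with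
  | refl => exact fun v _ => rfl
  | head hstep _ ih => exact contig_eq_id hmin hstep ih

lemma min_iso {A : Cplx V} {B : Cplx W} (hA : MinimalCplx A) (hB : MinimalCplx B)
    {f : V → W} (h : StrongEquiv A B f) : IsIsoMap A B f := by
  obtain ⟨hf, g, hg, h1, h2⟩ := h
  have hgf : ∀ v, IsVertex A v → g (f v) = v := contigclass_eq_id hA h1
  have hfg : ∀ w, IsVertex B w → f (g w) = w := contigclass_eq_id hB h2
  refine ⟨hf, ?_, ?_⟩
  · intro v hv v' hv' he
    have := congrArg g he
    rwa [hgf v hv, hgf v' hv'] at this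
  · apply Finset.Subset.antisymm
    · intro τ hτ
      obtain ⟨σ, hσ, rfl⟩ := Finset.mem_image.mp hτ
      exact hf σ hσ
    · intro τ hτ
      refine Finset.mem_image.mpr ⟨τ.image g, hg τ hτ, ?_⟩
      rw [Finset.image_image]
      exact image_id_of_fix (f := f ∘ g) (fun x hx => hfg x (vertex_of_mem hτ hx))

lemma iso_inv {A : Cplx V} {B : Cplx W} {f : V → W} (h : IsIsoMap A B f)
    (hA : A.faces.Nonempty) :
    ∃ g : W → V, IsIsoMap B A g ∧ (∀ v, IsVertex A v → g (f v) = v) ∧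
      (∀ w, IsVertex B w → f (g w) = w) := by
  classical
  obtain ⟨σ₀, hσ₀⟩ := hA
  obtain ⟨v₀, hv₀⟩ := A.nonempty_of_mem hσ₀
  have hdef : ∀ w : W, ∃ v : V, (∃ v', IsVertex A v' ∧ f v' = w) →
      (IsVertex A v ∧ f v = w) := by
    intro w
    by_cases hw : ∃ v', IsVertex A v' ∧ f v' = w
    · obtain ⟨v', hv'⟩ := hw
      exact ⟨v', fun _ => hv'⟩
    · exact ⟨v₀, fun hc => absurd hc hw⟩
  choose g hgspec using hdef
  have hexists : ∀ w, IsVertex B w → ∃ v, IsVertex A v ∧ f v = w := by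
    intro w hw
    have : {w} ∈ A.faces.image (fun σ => σ.image f) := h.2.2.symm ▸ hw
    obtain ⟨σ, hσ, he⟩ := Finset.mem_image.mp this
    obtain ⟨x, hx⟩ := A.nonempty_of_mem hσ
    have hfx : f x ∈ ({w} : Finset W) := he ▸ Finset.mem_image_of_mem f hx
    rw [Finset.mem_singleton] at hfx
    exact ⟨x, vertex_of_mem hσ hx, hfx⟩
  have hback : ∀ v, IsVertex A v → g (f v) = v := by
    intro v hv
    obtain ⟨h1, h2⟩ := hgspec (f v) ⟨v, hv, rfl⟩
    exact h.2.1 h1 hv h2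
  have hfwd : ∀ w, IsVertex B w → f (g w) = w := fun w hw =>
    (hgspec w (hexists w hw)).2
  have hgs : IsSimplicial B A g := by
    intro τ hτ
    have : τ ∈ A.faces.image (fun σ => σ.image f) := h.2.2.symm ▸ hτ
    obtain ⟨σ, hσ, rfl⟩ := Finset.mem_image.mp this
    rw [Finset.image_image, image_id_of_fix (f := g ∘ f)
      (fun x hx => hback x (vertex_of_mem hσ hx))]
    exact hσ
  refine ⟨g, ⟨hgs, ?_, ?_⟩, hback, hfwd⟩
  · intro w hw w' hw' he
    have := congrArg f he
    rwa [hfwd w hw, hfwd w' hw'] at this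
  · apply Finset.Subset.antisymm
    · intro σ hσ
      obtain ⟨τ, hτ, rfl⟩ := Finset.mem_image.mp hσ
      exact hgs τ hτ
    · intro σ hσ
      refine Finset.mem_image.mpr ⟨σ.image f, h.1 σ hσ, ?_⟩
      rw [Finset.image_image]
      exact image_id_of_fix (f := g ∘ f) (fun x hx => hback x (vertex_of_mem hσ hx))

lemma iso_comp_map {A : Cplx V} {B : Cplx W} {C : Cplx U} {f : V → W} {f' : W → U}
    (h : IsIsoMap A B f) (h' : IsIsoMap B C f') : IsIsoMap A C (fun x => f' (f x)) := by
  have himg : ∀ σ : Finset V, σ.image (fun x => f' (f x)) = (σ.image f).image f' :=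
    fun σ => (Finset.image_image (f := f) (g := f')).symm
  refine ⟨?_, ?_, ?_⟩
  · intro σ hσ; rw [himg]; exact h'.1 _ (h.1 _ hσ)
  · intro v hv v' hv' he
    exact h.2.1 hv hv' (h'.2.1 (iso_vertex h hv) (iso_vertex h hv') he)
  · have e1 : A.faces.image (fun σ : Finset V => σ.image (fun x => f' (f x)))
        = A.faces.image (fun σ => (σ.image f).image f') :=
      Finset.image_congr (fun σ _ => himg σ)
    have e2 : (A.faces.image (fun σ => σ.image f)).image (fun τ => τ.image f')
        = A.faces.image (fun σ : Finset V => (σ.image f).image f') := by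
      rw [Finset.image_image]; rfl
    rw [e1, ← e2, h.2.2, h'.2.2]

lemma se_trans {A : Cplx V} {B : Cplx W} {C : Cplx U} {f : V → W} {f' : W → U}
    (h : StrongEquiv A B f) (h' : StrongEquiv B C f') :
    StrongEquiv A C (fun x => f' (f x)) := by
  obtain ⟨hf, g, hg, h1, h2⟩ := h
  obtain ⟨hf', g', hg', h1', h2'⟩ := h'
  refine ⟨?_, fun z => g (g' z), ?_, ?_, ?_⟩
  · intro σ hσ
    have := hf' _ (hf _ hσ)
    rwa [Finset.image_image] at this
  · intro τ hτ
    have := hg _ (hg' _ hτ)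
    rwa [Finset.image_image] at this
  · have step1 := contigclass_lift h1' hf hg
    have h1'' : ContigClass A A (fun x => g (id (f x))) id := h1
    exact Relation.ReflTransGen.trans step1 h1''
  · have step1 := contigclass_lift h2 hg' hf'
    have h2'' : ContigClass C C (fun z => f' (id (g' z))) id := h2'
    exact Relation.ReflTransGen.trans step1 h2''

lemma se_of_iso {A : Cplx V} {B : Cplx W} {f : V → W} (h : IsIsoMap A B f)
    (hA : A.faces.Nonempty) : StrongEquiv A B f := by
  obtain ⟨g, hg, hback, hfwd⟩ := iso_inv h hA
  refine ⟨h.1, g, hg.1, ?_, ?_⟩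
  · refine Relation.ReflTransGen.single ?_
    intro σ hσ
    rw [show σ.image (g ∘ f) = σ from image_id_of_fix (f := g ∘ f)
      (fun x hx => hback x (vertex_of_mem hσ hx)),
      Finset.image_id, Finset.union_self]
    exact hσ
  · refine Relation.ReflTransGen.single ?_
    intro τ hτ
    rw [show τ.image (f ∘ g) = τ from image_id_of_fix (f := f ∘ g)
      (fun x hx => hfwd x (vertex_of_mem hτ hx)),
      Finset.image_id, Finset.union_self]
    exact hτ

lemma se_both {K L : Cplx V} (h : StrongCollapses K L) :
    ∃ G, StrongEquiv K L G ∧ StrongEquiv L K id ∧ (∀ v, IsVertex L v → G v = v) := by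
  obtain ⟨G, hGs, hGfix, hGc⟩ := collapses_data h
  have hsub : Subcplx L K := subcplx_of_collapses h
  have hid : IsSimplicial L K id := by
    intro σ hσ; rw [Finset.image_id]; exact hsub hσ
  have c2 : ContigClass L L (fun x => G (id x)) id := by
    refine Relation.ReflTransGen.single ?_
    intro σ hσ
    rw [show σ.image (fun x => G (id x)) = σ from image_id_of_fix
      (f := fun x => G (id x)) (fun x hx => hGfix x (vertex_of_mem hσ hx)),
      Finset.image_id, Finset.union_self]
    exact hσ
  have c1 : ContigClass K K (fun x => id (G x)) id := hGc
  exact ⟨G, ⟨hGs, id, hid, c1, c2⟩, ⟨hid, G, hGs, c2, c1⟩, hGfix⟩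

lemma homog_transfer {A : Cplx V} {B : Cplx W} {f : V → W} (h : IsIsoMap A B f)
    (hA : A.faces.Nonempty) (hhomA : VertexHomog A) : VertexHomog B := by
  obtain ⟨g, hg, hback, hfwd⟩ := iso_inv h hA
  intro w w' hw hw'
  obtain ⟨φ, hφ, hφv⟩ := hhomA (g w) (g w') (iso_vertex hg hw) (iso_vertex hg hw')
  refine ⟨fun z => f (φ (g z)), ?_, ?_⟩
  · exact iso_comp_map (iso_comp_map hg hφ) h
  · show f (φ (g w)) = w'
    rw [hφv, hfwd w' hw']

end Aux19
/-- the core of a vertex-homogeneous complex is vertex-homogeneous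
and isomorphic to the square nerve `N²(K)`. -/
theorem stmt19 {V : Type} (K : Cplx V) (hK : K.faces.Nonempty)
    (hhom : VertexHomog K) (K₀ : Cplx V) (hcore : IsCore K K₀) :
    VertexHomog K₀ ∧ Isomorphic (nerve (nerve K)) K₀ := by
  classical
  letI : DecidableEq V := fun a b => Classical.propDecidable (a = b)
  letI : DecidableEq (Finset V) := fun a b => Classical.propDecidable (a = b)
  letI : DecidableEq (Finset (Finset V)) := fun a b => Classical.propDecidable (a = b)
  have hsym := Mv_symm hK hhom
  obtain ⟨R, hRsub, hRcov, hRuniq⟩ := exists_reps K (vertexSet K)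
  set S : Finset V := vertexSet K \ R with hSdef
  set L : Cplx V := res K S with hLdef
  -- K strong collapses to L
  have hcoll : StrongCollapses K L := by
    apply collapses_res
    intro u hu
    have huV : u ∈ vertexSet K := (Finset.mem_sdiff.mp hu).1
    have huR : u ∉ R := (Finset.mem_sdiff.mp hu).2
    obtain ⟨r, hrR, hre⟩ := hRcov u huV
    refine ⟨mem_vertexSet.mp huV, r, mem_vertexSet.mp (hRsub hrR), ?_, ?_, ?_⟩
    · intro hrS; exact (Finset.mem_sdiff.mp hrS).2 hrR
    · rintro rfl; exact huR hrR
    · rw [hre]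
  -- the vertices of L are exactly the elements of R
  have hvertL : ∀ {x : V}, IsVertex L x ↔ x ∈ R := by
    intro x
    constructor
    · intro hx
      obtain ⟨h1, h2⟩ := mem_res.mp hx
      have hxV : x ∈ vertexSet K := mem_vertexSet.mpr h1
      by_contra hxR
      exact h2 x (Finset.mem_sdiff.mpr ⟨hxV, hxR⟩) (Finset.mem_singleton_self x)
    · intro hx
      refine mem_res.mpr ⟨mem_vertexSet.mp (hRsub hx), ?_⟩
      intro u hu hux
      rw [Finset.mem_singleton] at hux
      subst hux
      exact (Finset.mem_sdiff.mp hu).2 hx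
  have hRS : ∀ {x : V}, x ∈ R → x ∉ S := by
    intro x hx hxS
    exact (Finset.mem_sdiff.mp hxS).2 hx
  -- representatives inside maximal faces
  have hrepmem : ∀ {τ : Finset V}, τ ∈ maxFaces K → ∀ u ∈ τ,
      ∃ r ∈ R, r ∈ τ ∧ Mv K r = Mv K u := by
    intro τ hτ u hu
    have huV : IsVertex K u := vertex_of_mem (mem_maxFaces'.mp hτ).1 hu
    obtain ⟨r, hrR, hre⟩ := hRcov u (mem_vertexSet.mpr huV)
    have hrτ : r ∈ τ := by
      have h1 : τ ∈ Mv K u := mem_Mv.mpr ⟨hτ, hu⟩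
      rw [← hre] at h1
      exact (mem_Mv.mp h1).2
    exact ⟨r, hrR, hrτ, hre⟩
  -- the trace of a maximal face of K is a maximal face of L
  have hbarface : ∀ {τ : Finset V}, τ ∈ maxFaces K →
      τ.filter (fun x => x ∉ S) ∈ L.faces := by
    intro τ hτ
    have hτf := (mem_maxFaces'.mp hτ).1
    obtain ⟨u, hu⟩ := K.nonempty_of_mem hτf
    obtain ⟨r, hrR, hrτ, _⟩ := hrepmem hτ u hu
    refine mem_res.mpr ⟨?_, ?_⟩
    · exact K.down_closed hτf (Finset.filter_subset _ τ)
        ⟨r, Finset.mem_filter.mpr ⟨hrτ, hRS hrR⟩⟩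
    · intro x hx hxmem
      exact (Finset.mem_filter.mp hxmem).2 hx
  have hbarmax : ∀ {τ : Finset V}, τ ∈ maxFaces K →
      τ.filter (fun x => x ∉ S) ∈ maxFaces L := by
    intro τ hτ
    refine mem_maxFaces'.mpr ⟨hbarface hτ, ?_⟩
    intro ρ hρ hsub
    obtain ⟨hρK, hρav⟩ := mem_res.mp hρ
    obtain ⟨τ'', hτ''max, hρτ''⟩ := exists_max hρK
    have hττ'' : τ ⊆ τ'' := by
      intro u hu
      obtain ⟨r, hrR, hrτ, hre⟩ := hrepmem hτ u hu
      have hrbar : r ∈ τ.filter (fun x => x ∉ S) :=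
        Finset.mem_filter.mpr ⟨hrτ, hRS hrR⟩
      have hrτ'' : r ∈ τ'' := hρτ'' (hsub hrbar)
      have : τ'' ∈ Mv K r := mem_Mv.mpr ⟨hτ''max, hrτ''⟩
      rw [hre] at this
      exact (mem_Mv.mp this).2
    have hττ''eq : τ = τ'' :=
      (mem_maxFaces'.mp hτ).2 τ'' (mem_maxFaces'.mp hτ''max).1 hττ''
    apply Finset.Subset.antisymm hsub
    intro x hx
    refine Finset.mem_filter.mpr ⟨?_, ?_⟩
    · rw [hττ''eq]; exact hρτ'' hx
    · intro hxS
      exact hρav x hxS hx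
  -- L is a minimal complex
  have minL : MinimalCplx L := by
    intro v hv
    obtain ⟨a, hcone⟩ := hv
    have hdom : DominatedBy L v a := hcone
    have hav : a ≠ v := dom_ne hdom
    have hpairL : insert v {a} ∈ L.faces := (mem_link'.mp hdom.1).2.2
    have hvL : IsVertex L v := vertex_of_mem hpairL (Finset.mem_insert_self v _)
    have haL : IsVertex L a :=
      vertex_of_mem hpairL (Finset.mem_insert_of_mem (Finset.mem_singleton_self a))
    have hvR : v ∈ R := hvertL.mp hvL
    have haR : a ∈ R := hvertL.mp haL
    have hvK : IsVertex K v := (mem_res.mp hvL).1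
    have haK : IsVertex K a := (mem_res.mp haL).1
    have hMva : Mv K v ⊆ Mv K a := by
      intro τ hτ
      rw [mem_Mv] at hτ ⊢
      obtain ⟨hτmax, hvτ⟩ := hτ
      have h1 : τ.filter (fun x => x ∉ S) ∈ maxFaces L := hbarmax hτmax
      have hvbar : v ∈ τ.filter (fun x => x ∉ S) :=
        Finset.mem_filter.mpr ⟨hvτ, hRS hvR⟩
      have h2 := dom_subset hdom _ h1 hvbar
      exact ⟨hτmax, (Finset.mem_filter.mp h2).1⟩
    have hMav : Mv K a ⊆ Mv K v := hsym v a hvK haK hMva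
    exact hav (hRuniq a haR v hvR (Finset.Subset.antisymm hMav hMva))
  -- each Mv is a maximal face of the nerve
  have hMvface : ∀ {v : V}, IsVertex K v → Mv K v ∈ (nerve K).faces := by
    intro v hv
    obtain ⟨τ, hτmax, hτsub⟩ := exists_max hv
    refine mem_nerve'.mpr ⟨Finset.filter_subset _ _, ?_, v, ?_⟩
    · exact ⟨τ, mem_Mv.mpr ⟨hτmax, hτsub (Finset.mem_singleton_self v)⟩⟩
    · intro σ hσ
      exact (mem_Mv.mp hσ).2
  have hMvmax : ∀ {v : V}, IsVertex K v → Mv K v ∈ maxFaces (nerve K) := by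
    intro v hv
    refine mem_maxFaces'.mpr ⟨hMvface hv, ?_⟩
    intro T hT hsub
    obtain ⟨hTsub, hTne, w, hw⟩ := mem_nerve'.mp hT
    obtain ⟨ρ₀, hρ₀⟩ := hTne
    have hwK : IsVertex K w :=
      vertex_of_mem (mem_maxFaces'.mp (hTsub hρ₀)).1 (hw ρ₀ hρ₀)
    have h1 : Mv K v ⊆ Mv K w := by
      intro ρ hρ
      exact mem_Mv.mpr ⟨(mem_Mv.mp hρ).1, hw ρ (hsub hρ)⟩
    have h2 : Mv K w ⊆ Mv K v := hsym v w hv hwK h1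
    apply Finset.Subset.antisymm hsub
    intro ρ hρ
    exact h2 (mem_Mv.mpr ⟨hTsub hρ, hw ρ hρ⟩)
  -- every maximal face of the nerve is of the form Mv
  have hnervemax : ∀ {Sg : Finset (Finset V)}, Sg ∈ maxFaces (nerve K) →
      ∃ u, IsVertex K u ∧ Mv K u = Sg := by
    intro Sg hSg
    obtain ⟨hSgf, hSgmax⟩ := mem_maxFaces'.mp hSg
    obtain ⟨hSgsub, hSgne, u, hu⟩ := mem_nerve'.mp hSgf
    obtain ⟨ρ₀, hρ₀⟩ := hSgne
    have huK : IsVertex K u :=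
      vertex_of_mem (mem_maxFaces'.mp (hSgsub hρ₀)).1 (hu ρ₀ hρ₀)
    have hsub : Sg ⊆ Mv K u := by
      intro ρ hρ
      exact mem_Mv.mpr ⟨hSgsub hρ, hu ρ hρ⟩
    exact ⟨u, huK, (hSgmax _ (hMvface huK) hsub).symm⟩
  -- the map v ↦ Mv K v is a simplicial isomorphism L ≅ N²(K)
  have hsimpl : IsSimplicial L (nerve (nerve K)) (fun v => Mv K v) := by
    intro σ hσ
    have hσK : σ ∈ K.faces := (mem_res.mp hσ).1
    obtain ⟨τ, hτmax, hτsub⟩ := exists_max hσK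
    refine mem_nerve'.mpr ⟨?_, ?_, τ, ?_⟩
    · intro Sg hSg
      obtain ⟨x, hx, rfl⟩ := Finset.mem_image.mp hSg
      exact hMvmax (vertex_of_mem hσK hx)
    · obtain ⟨x, hx⟩ := K.nonempty_of_mem hσK
      exact ⟨Mv K x, Finset.mem_image_of_mem _ hx⟩
    · intro Sg hSg
      obtain ⟨x, hx, rfl⟩ := Finset.mem_image.mp hSg
      exact mem_Mv.mpr ⟨hτmax, hτsub hx⟩
  have hinj : Set.InjOn (fun v => Mv K v) {v | IsVertex L v} := by
    intro x hx y hy he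
    exact hRuniq x (hvertL.mp hx) y (hvertL.mp hy) he
  have himg : L.faces.image (fun σ => σ.image (fun v => Mv K v))
      = (nerve (nerve K)).faces := by
    apply Finset.Subset.antisymm
    · intro F hF
      obtain ⟨σ, hσ, rfl⟩ := Finset.mem_image.mp hF
      exact hsimpl σ hσ
    · intro F hF
      obtain ⟨hFsub, hFne, τ, hτcom⟩ := mem_nerve'.mp hF
      obtain ⟨Sg0, hSg0⟩ := hFne
      have hτmax : τ ∈ maxFaces K := by
        have h1 := mem_nerve'.mp (mem_maxFaces'.mp (hFsub hSg0)).1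
        exact h1.1 (hτcom Sg0 hSg0)
      have claim : ∀ Sg ∈ F, ∃ r ∈ R, Mv K r = Sg := by
        intro Sg hSg
        obtain ⟨u, huK, hue⟩ := hnervemax (hFsub hSg)
        obtain ⟨r, hrR, hre⟩ := hRcov u (mem_vertexSet.mpr huK)
        exact ⟨r, hrR, hre.trans hue⟩
      set σ : Finset V := R.filter (fun r => Mv K r ∈ F) with hσdef
      have hσsubτ : σ ⊆ τ := by
        intro r hr
        have h1 : Mv K r ∈ F := (Finset.mem_filter.mp hr).2
        exact (mem_Mv.mp (hτcom _ h1)).2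
      have hσne : σ.Nonempty := by
        obtain ⟨r, hrR, hre⟩ := claim Sg0 hSg0
        exact ⟨r, Finset.mem_filter.mpr ⟨hrR, hre.symm ▸ hSg0⟩⟩
      have hσL : σ ∈ L.faces := by
        refine mem_res.mpr ⟨K.down_closed (mem_maxFaces'.mp hτmax).1 hσsubτ hσne, ?_⟩
        intro u hu humem
        exact (Finset.mem_sdiff.mp hu).2 (Finset.mem_filter.mp humem).1
      refine Finset.mem_image.mpr ⟨σ, hσL, ?_⟩
      apply Finset.Subset.antisymm
      · intro Sg hSg
        obtain ⟨r, hr, rfl⟩ := Finset.mem_image.mp hSg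
        exact (Finset.mem_filter.mp hr).2
      · intro Sg hSg
        obtain ⟨r, hrR, hre⟩ := claim Sg hSg
        refine Finset.mem_image.mpr ⟨r, Finset.mem_filter.mpr ⟨hrR, hre.symm ▸ hSg⟩, hre⟩
  have isoμ : IsIsoMap L (nerve (nerve K)) (fun v => Mv K v) := ⟨hsimpl, hinj, himg⟩
  -- L has a vertex
  have hLne : L.faces.Nonempty := by
    obtain ⟨σ₀, hσ₀⟩ := hK
    obtain ⟨v₁, hv₁⟩ := K.nonempty_of_mem hσ₀
    have hv₁V : v₁ ∈ vertexSet K := mem_vertexSet.mpr (vertex_of_mem hσ₀ hv₁)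
    obtain ⟨r₁, hr₁R, _⟩ := hRcov v₁ hv₁V
    exact ⟨{r₁}, hvertL.mpr hr₁R⟩
  -- strong equivalences and core uniqueness
  obtain ⟨G, hseKL, hseLK, hGfix⟩ := se_both hcoll
  obtain ⟨G₀, hseKK₀, hseK₀K, _⟩ := se_both hcore.2
  have hseLK₀ : StrongEquiv L K₀ (fun x => G₀ (id x)) := se_trans hseLK hseKK₀
  have hisoLK₀ : IsIsoMap L K₀ (fun x => G₀ (id x)) := min_iso minL hcore.1 hseLK₀
  -- vertex-homogeneity of L
  have homL : VertexHomog L := by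
    intro x y hx hy
    have hxK : IsVertex K x := (mem_res.mp hx).1
    have hyK : IsVertex K y := (mem_res.mp hy).1
    obtain ⟨φ, hφ, hφx⟩ := hhom x y hxK hyK
    have hseKK : StrongEquiv K K φ := se_of_iso hφ hK
    have hse1 : StrongEquiv L K (fun z => φ (id z)) := se_trans hseLK hseKK
    have hse2 : StrongEquiv L L (fun z => G ((fun w => φ (id w)) z)) :=
      se_trans hse1 hseKL
    refine ⟨_, min_iso minL minL hse2, ?_⟩
    show G (φ x) = y
    rw [hφx]
    exact hGfix y hy
  constructor
  · exact homog_transfer hisoLK₀ hLne homL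
  · obtain ⟨g2, hg2, _, _⟩ := iso_inv isoμ hLne
    exact ⟨_, iso_comp_map hg2 hisoLK₀⟩

end StrongHomotopy
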